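/- Small-step reduction of commands does not increase the depth of reverse handlers: if P → P' then d(P) ≥ d(P'). Moreover, the reduction step F[rev handle(V)⟨xᵢ⟩.R with H] → F[RH_{V,H}(⟨xᵢ⟩.R)] strictly decreases the depth of the redex: d(rev handle(V)⟨xᵢ⟩.R with H) > d(RH_{V,H}(⟨xᵢ⟩.R)). -/
import Mathlib


/-- Terms of the differentiable language (de Bruijn indices; `tlet` and the middle
argument of `rd` bind one variable). -/
inductive Tm : Type
  | var : ℕ → Tm
  | const : ℕ → Tm
  | app : ℕ → Tm → Tm
  | plus : Tm → Tm → Tm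
  | pair : Tm → Tm → Tm
  | proj : ℕ → Tm → Tm
  | tlet : Tm → Tm → Tm
  | rd : Tm → Tm → Tm → Tm

mutual
/-- Commands: `ret M`, operation calls `op o M`, sequencing
`clet P Q` (i.e. `let x ⇐ P in Q`, with `Q` binding one variable), and
reverse handling `rhandle M R H` (with `R` binding one variable). -/
inductive Cmd : Type
  | ret : Tm → Cmd
  | op : ℕ → Tm → Cmd
  | clet : Cmd → Cmd → Cmd
  | rhandle : Tm → Cmd → Handler → Cmd
/-- A reverse handler: a return clause together with, for each operation symbol, a
forward clause `Qf` and a backward clause `Qb`. -/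
inductive Handler : Type
  | retClauseOnly : Cmd → Handler
  | cons : ℕ → Cmd → Cmd → Handler → Handler
end

mutual
/-- Depth of reverse handlers in a command (Definition 3.5 of the paper):
`d(ret M) = 0`, `d(Op(M)) = 0`, `d(let x ⇐ P in Q) = max(d P, d Q)`,
`d(rev handle(M)⟨x⟩.R with H) = 1 + max(d R, d H)`. -/
def Cmd.depth : Cmd → ℕ
  | .ret _ => 0
  | .op _ _ => 0
  | .clet p q => max p.depth q.depth
  | .rhandle _ r h => 1 + max r.depth h.depth
/-- Depth of a handler: the maximum of the depths of its constituent commands. -/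
def Handler.depth : Handler → ℕ
  | .retClauseOnly p => p.depth
  | .cons _ qf qb h => max qf.depth (max qb.depth h.depth)
end

def Handler.retClause : Handler → Cmd
  | .retClauseOnly p => p
  | .cons _ _ _ h => h.retClause

def Handler.lookup : Handler → ℕ → Option (Cmd × Cmd)
  | .retClauseOnly _, _ => none
  | .cons o qf qb h, n => if o = n then some (qf, qb) else h.lookup n

def Tm.rename (f : ℕ → ℕ) : Tm → Tm
  | .var n => .var (f n)
  | .const c => .const c
  | .app g a => .app g (a.rename f)
  | .plus a b => .plus (a.rename f) (b.rename f)
  | .pair a b => .pair (a.rename f) (b.rename f)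
  | .proj i a => .proj i (a.rename f)
  | .tlet a b => .tlet (a.rename f)
      (b.rename fun k => match k with | 0 => 0 | k + 1 => f k + 1)
  | .rd a b c => .rd (a.rename f)
      (b.rename fun k => match k with | 0 => 0 | k + 1 => f k + 1) (c.rename f)

/-- Lifting a parallel substitution under one binder. -/
def liftSub (σ : ℕ → Tm) : ℕ → Tm
  | 0 => .var 0
  | k + 1 => (σ k).rename (· + 1)

def Tm.sub (σ : ℕ → Tm) : Tm → Tm
  | .var n => σ n
  | .const c => .const c
  | .app g a => .app g (a.sub σ)
  | .plus a b => .plus (a.sub σ) (b.sub σ)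
  | .pair a b => .pair (a.sub σ) (b.sub σ)
  | .proj i a => .proj i (a.sub σ)
  | .tlet a b => .tlet (a.sub σ) (b.sub (liftSub σ))
  | .rd a b c => .rd (a.sub σ) (b.sub (liftSub σ)) (c.sub σ)

def Cmd.sub (σ : ℕ → Tm) : Cmd → Cmd
  | .ret m => .ret (m.sub σ)
  | .op o m => .op o (m.sub σ)
  | .clet p q => .clet (p.sub σ) (q.sub (liftSub σ))
  | .rhandle m r h => .rhandle (m.sub σ) (r.sub (liftSub σ)) h

/-- Substitution of a single value for the most recent variable. -/
def sub1 (V : Tm) : ℕ → Tm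
  | 0 => V
  | k + 1 => .var k

/-- Evaluation contexts `F^c ::= [] | let x ⇐ F^c in Q`, represented by the list of
their let-bodies, and the plugging operation. -/
def plug : List Cmd → Cmd → Cmd
  | [], c => c
  | q :: E, c => plug E (.clet c q)

/-- The head of a term context `F^t`: a command former with a term hole
(`ret [−]`, `Op([−])`, or `rev handle([−])⟨x⟩.R with H`). -/
inductive TCtx : Type
  | retC : TCtx
  | opC : ℕ → TCtx
  | rhC : Cmd → Handler → TCtx

def TCtx.fill : TCtx → Tm → Cmd
  | .retC, m => .ret m
  | .opC o, m => .op o m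
  | .rhC r h, m => .rhandle m r h

/-- The rewriting operation `RH_{V,H}(⟨y⟩.P)` of the operational semantics of reverse
handlers, presented as an inductive relation whose constructors are the defining
recursive equations (Fig. "rewriting rules for reverse handlers"): the return-variable
case, the pure-`let` case, the operation case (which inserts the forward clause `Qf`
before and the backward clause `Qb` after the recursively rewritten continuation), the
nested-handler case, and the pure-term case (which uses the reverse derivative `rd`). -/
inductive Rw : Tm → Handler → Cmd → Cmd → Prop
  | ret_var (V : Tm) (H : Handler) :
      Rw V H (.ret (.var 0))
        (.clet (H.retClause.sub (sub1 V)) (.ret (.var 0)))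
  | pure_let (V : Tm) (H : Handler) (E : List Cmd) (j : ℕ) (R P' : Cmd) :
      Rw V H (plug E (R.sub (sub1 (.var j)))) P' →
      Rw V H (plug E (.clet (.ret (.var j)) R)) P'
  | opc (V : Tm) (H : Handler) (E : List Cmd) (o : ℕ) (Qf Qb K : Cmd) :
      H.lookup o = some (Qf, Qb) →
      Rw (Tm.pair (.var 0) V) H (plug E (.ret (.var 0))) K →
      Rw V H (plug E (.op o (.var 0)))
        (.clet (Qf.sub (sub1 V))
          (.clet K (.clet (Qb.sub (sub1 V)) (.ret (.plus (.var 0) (.var 1))))))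
  | nested (V W : Tm) (H H' : Handler) (E : List Cmd) (R K P' : Cmd) :
      Rw W H' R K →
      Rw V H (plug E K) P' →
      Rw V H (plug E (.rhandle W R H')) P'
  | tmc (V : Tm) (H : Handler) (E : List Cmd) (F : TCtx) (M : Tm) (K : Cmd) :
      (∀ n, M ≠ .var n) →
      Rw (Tm.pair (.var 0) V) H (plug E (F.fill (.var 0))) K →
      Rw V H (plug E (F.fill M))
        (.clet (.ret (M.sub (sub1 V)))
          (.clet K (.ret (.plus (.var 0) (.rd (.var 1) M V)))))

/-- Small-step reduction of commands, parametrized by the small-step reduction `T` on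
terms: (i) term reduction inside term contexts, (ii) `let x ⇐ ret V in R → R[V/x]`,
(iii) the reverse-handler rule. -/
inductive Step (T : Tm → Tm → Prop) : Cmd → Cmd → Prop
  | tm (E : List Cmd) (F : TCtx) (M M' : Tm) :
      T M M' → Step T (plug E (F.fill M)) (plug E (F.fill M'))
  | beta (E : List Cmd) (V : Tm) (R : Cmd) :
      Step T (plug E (.clet (.ret V) R)) (plug E (R.sub (sub1 V)))
  | handle (E : List Cmd) (V : Tm) (R : Cmd) (H : Handler) (R' : Cmd) :
      Rw V H R R' → Step T (plug E (.rhandle V R H)) (plug E R')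

def Edepth : List Cmd → ℕ
  | [] => 0
  | q :: E => max q.depth (Edepth E)

lemma plug_depth (E : List Cmd) (c : Cmd) :
    (plug E c).depth = max (Edepth E) c.depth := by
  induction E generalizing c with
  | nil => simp [plug, Edepth]
  | cons q E ih =>
    simp only [plug, Edepth, ih, Cmd.depth]
    omega

lemma depth_sub : ∀ (c : Cmd) (σ : ℕ → Tm), (c.sub σ).depth = c.depth
  | .ret _, _ => rfl
  | .op _ _, _ => rfl
  | .clet p q, σ => by
      simp only [Cmd.sub, Cmd.depth, depth_sub p, depth_sub q]
  | .rhandle m r h, σ => by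
      simp only [Cmd.sub, Cmd.depth, depth_sub r]

lemma retClause_depth : ∀ H : Handler, H.retClause.depth ≤ H.depth
  | .retClauseOnly p => le_refl _
  | .cons o qf qb h => by
      have := retClause_depth h
      simp only [Handler.retClause, Handler.depth]
      omega

lemma lookup_depth : ∀ (H : Handler) (o : ℕ) (Qf Qb : Cmd),
    H.lookup o = some (Qf, Qb) → Qf.depth ≤ H.depth ∧ Qb.depth ≤ H.depth
  | .retClauseOnly _, _, _, _ => by simp [Handler.lookup]
  | .cons o' qf' qb' h, o, Qf, Qb => by
      simp only [Handler.lookup]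
      split
      · rintro ⟨⟩
        simp only [Handler.depth]
        omega
      · intro hl
        have := lookup_depth h o Qf Qb hl
        simp only [Handler.depth]
        omega

lemma fill_depth (F : TCtx) (M N : Tm) : (F.fill M).depth = (F.fill N).depth := by
  cases F <;> rfl

lemma rw_depth {V : Tm} {H : Handler} {R R' : Cmd}
    (h : Rw V H R R') : R'.depth ≤ max R.depth H.depth := by
  induction h with
  | ret_var V H =>
    have := retClause_depth H
    simp only [Cmd.depth, depth_sub]
    omega
  | pure_let V H E j R P' _ ih =>
    rw [plug_depth] at ih ⊢
    simp only [Cmd.depth, depth_sub] at ih ⊢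
    omega
  | opc V H E o Qf Qb K hl _ ih =>
    obtain ⟨h1, h2⟩ := lookup_depth H o Qf Qb hl
    rw [plug_depth] at ih ⊢
    simp only [Cmd.depth, depth_sub] at ih ⊢
    omega
  | nested V W H H' E R K P' _ _ ih1 ih2 =>
    rw [plug_depth] at ih2 ⊢
    simp only [Cmd.depth] at ih2 ⊢
    omega
  | tmc V H E F M K _ _ ih =>
    rw [plug_depth] at ih ⊢
    rw [fill_depth F M (.var 0)]
    simp only [Cmd.depth, depth_sub] at ih ⊢
    omega

/-- Lemma 5.4 (`depth-reduction`): small-step reduction does not increase the depth of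
reverse handlers (`P → P'` implies `d(P) ≥ d(P')`), and the reverse-handler reduction
step strictly decreases the depth of the redex:
`d(rev handle(V)⟨x⟩.R with H) > d(RH_{V,H}(⟨x⟩.R))`. -/
theorem step_depth (T : Tm → Tm → Prop) :
    (∀ P P' : Cmd, Step T P P' → P.depth ≥ P'.depth) ∧
    (∀ (V : Tm) (R : Cmd) (H : Handler) (R' : Cmd),
      Rw V H R R' → (Cmd.rhandle V R H).depth > R'.depth) := by
  have hrw : ∀ (V : Tm) (R : Cmd) (H : Handler) (R' : Cmd),
      Rw V H R R' → (Cmd.rhandle V R H).depth > R'.depth := by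
    intro V R H R' h
    have := rw_depth h
    simp only [Cmd.depth]
    omega
  refine ⟨?_, hrw⟩
  intro P P' h
  induction h with
  | tm E F M M' _ =>
    rw [plug_depth, plug_depth, fill_depth F M' M]
  | beta E V R =>
    rw [plug_depth, plug_depth]
    simp only [Cmd.depth, depth_sub]
    omega
  | handle E V R H R' hr =>
    have := hrw V R H R' hr
    rw [plug_depth, plug_depth]
    omega
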